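/- arXiv:math/0702240 — 3 statements merged into one kernel-verified Lean document; each statement's English description precedes it below -/
import Mathlib

section
/- Let R be a valuation ring with residue field k and fraction field F. Suppose A is an R-algebra that is free of finite rank as an R-module, and A ⊗_R k is a division algebra. Then A ⊗_R F is also a division algebra. -/
open scoped TensorProduct nonZeroDivisors

/-!
Over a valuation ring every nonzero `a ∈ A` is `r • a'` with `r ≠ 0` and `a'` primitive (some
coordinate equal to `1`: divide by the coordinate generating the largest ideal), and a primitive
`a'` stays nonzero in `A ⊗ k`. So `a * b = 0` in the torsion-free `A` forces `a' * b' = 0`, which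
is impossible in `A ⊗ k`: `A` has no zero divisors. Neither has its localization `F ⊗ A`, which
is thus a domain finite-dimensional over the field `F`, i.e. a division algebra.
-/

theorem Module.Basis.tmul_one_ne_zero {R M S ι : Type*} [CommSemiring R] [AddCommMonoid M]
    [Module R M] [Semiring S] [Algebra R S] [Nontrivial S] (b : Module.Basis ι R M) {m : M}
    {i : ι} (h : b.repr m i = 1) : m ⊗ₜ[R] (1 : S) ≠ 0 := by
  intro h0
  simpa [h] using congrArg ((TensorProduct.lid R S).toLinearMap ∘ₗ (b.coord i).rTensor S) h0

section ValuationRing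

variable {R : Type*} [CommRing R] [IsDomain R] [ValuationRing R]

theorem ValuationRing.exists_dvd_forall {ι : Type*} [Finite ι] [Nonempty ι] (c : ι → R) :
    ∃ i, ∀ j, c i ∣ c j := by
  classical
  have := Fintype.ofFinite ι
  obtain ⟨i, -, hi⟩ :=
    Finset.univ.exists_max_image (fun i => Ideal.span {c i}) Finset.univ_nonempty
  exact ⟨i, fun j => Ideal.span_singleton_le_span_singleton.mp (hi j (Finset.mem_univ j))⟩

variable {M : Type*} [AddCommGroup M] [Module R M]

theorem Module.Basis.exists_eq_smul_and_repr_eq_one {ι : Type*} [Fintype ι]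
    (b : Module.Basis ι R M) {m : M} (hm : m ≠ 0) :
    ∃ r : R, r ≠ 0 ∧ ∃ m' : M, m = r • m' ∧ ∃ i, b.repr m' i = 1 := by
  obtain ⟨j, hj⟩ : ∃ j, b.repr m j ≠ 0 := by
    by_contra! h
    exact hm (b.repr.injective (Finsupp.ext fun j => by simp [h j]))
  have : Nonempty ι := ⟨j⟩
  obtain ⟨i, hi⟩ := ValuationRing.exists_dvd_forall (b.repr m)
  choose u hu using hi
  have hci : b.repr m i ≠ 0 := fun h0 => hj (by rw [hu j, h0, zero_mul])
  have hrepr : ∀ j, b.repr (b.equivFun.symm u) j = u j := fun j => by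
    rw [← b.equivFun_apply, b.equivFun.apply_symm_apply]
  refine ⟨b.repr m i, hci, b.equivFun.symm u, b.repr.injective ?_, i, ?_⟩
  · ext j
    rw [map_smul, Finsupp.smul_apply, hrepr, smul_eq_mul, hu j]
  · rw [hrepr]
    exact mul_left_cancel₀ hci ((hu i).symm.trans (mul_one _).symm)

theorem exists_eq_smul_and_tmul_one_ne_zero [Module.Free R M] [Module.Finite R M] (S : Type*)
    [Semiring S] [Algebra R S] [Nontrivial S] {m : M} (hm : m ≠ 0) :
    ∃ r : R, r ≠ 0 ∧ ∃ m' : M, m = r • m' ∧ m' ⊗ₜ[R] (1 : S) ≠ 0 := by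
  obtain ⟨r, hr, m', rfl, i, hi⟩ := (Module.Free.chooseBasis R M).exists_eq_smul_and_repr_eq_one hm
  exact ⟨r, hr, m', rfl, (Module.Free.chooseBasis R M).tmul_one_ne_zero hi⟩

variable (R) in
theorem noZeroDivisors_of_tensorProduct (A : Type*) [Ring A] [Algebra R A] [Module.Free R A]
    [Module.Finite R A] (S : Type*) [Semiring S] [Algebra R S] [Nontrivial S]
    [NoZeroDivisors (A ⊗[R] S)] : NoZeroDivisors A where
  eq_zero_or_eq_zero_of_mul_eq_zero {a b} hab := by
    by_contra! h
    obtain ⟨r, hr, a', rfl, ha'⟩ := exists_eq_smul_and_tmul_one_ne_zero (R := R) S h.1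
    obtain ⟨s, hs, b', rfl, hb'⟩ := exists_eq_smul_and_tmul_one_ne_zero (R := R) S h.2
    have hab' : a' * b' = 0 := by
      rw [smul_mul_smul_comm] at hab
      exact (smul_eq_zero.mp hab).resolve_left (mul_ne_zero hr hs)
    have : a' ⊗ₜ[R] (1 : S) * b' ⊗ₜ[R] (1 : S) = 0 := by
      rw [Algebra.TensorProduct.tmul_mul_tmul, hab', mul_one, TensorProduct.zero_tmul]
    exact (mul_eq_zero.mp this).elim ha' hb'

end ValuationRing

namespace IsLocalizedModule

variable {R M M' : Type*} [CommRing R] [AddCommGroup M] [Module R M] [AddCommGroup M']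
  [Module R M']

theorem injective_of_isTorsionFree [Module.IsTorsionFree R M] (f : M →ₗ[R] M')
    [IsLocalizedModule R⁰ f] : Function.Injective f :=
  (injective_iff_isRegular R⁰ f).mpr fun s =>
    Module.IsTorsionFree.isSMulRegular (isRegular_iff_mem_nonZeroDivisors.mpr s.2)

theorem noZeroDivisors {A B : Type*} [Ring A] [Algebra R A] [Module.IsTorsionFree R A]
    [NoZeroDivisors A] [Ring B] [Algebra R B] (f : A →ₐ[R] B)
    [IsLocalizedModule R⁰ f.toLinearMap] : NoZeroDivisors B where
  eq_zero_or_eq_zero_of_mul_eq_zero {x y} hxy := by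
    obtain ⟨⟨a, s⟩, hs⟩ := surj R⁰ f.toLinearMap x
    obtain ⟨⟨b, t⟩, ht⟩ := surj R⁰ f.toLinearMap y
    simp only [AlgHom.toLinearMap_apply, Submonoid.smul_def] at hs ht
    have hab : f (a * b) = 0 := by
      rw [map_mul, ← hs, ← ht, smul_mul_smul_comm, hxy, smul_zero]
    have eq_zero_of_smul (u : R⁰) {z : B} (hz : (u : R) • z = 0) : z = 0 :=
      smul_injective f.toLinearMap u (by simpa [Submonoid.smul_def] using hz)
    rcases mul_eq_zero.mp (injective_of_isTorsionFree f.toLinearMap (by simpa using hab)) with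
      rfl | rfl
    · exact Or.inl (eq_zero_of_smul s (by rw [hs, map_zero]))
    · exact Or.inr (eq_zero_of_smul t (by rw [ht, map_zero]))

end IsLocalizedModule

/-- Let `R` be a valuation ring with residue field `k` and fraction
field `F`.  If `A` is an `R`-algebra, free of finite rank as an `R`-module, such that
`A ⊗[R] k` is a division algebra, then `A ⊗[R] F` is a division algebra. -/
theorem stmt0 (R : Type*) [CommRing R] [IsDomain R] [ValuationRing R]
    (A : Type*) [Ring A] [Algebra R A] [Module.Free R A] [Module.Finite R A]
    [Nontrivial (A ⊗[R] IsLocalRing.ResidueField R)]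
    (hdiv : ∀ x : A ⊗[R] IsLocalRing.ResidueField R, x ≠ 0 → IsUnit x) :
    Nontrivial (A ⊗[R] FractionRing R) ∧
      ∀ x : A ⊗[R] FractionRing R, x ≠ 0 → IsUnit x := by
  set k := IsLocalRing.ResidueField R
  set F := FractionRing R
  have : NoZeroDivisors (A ⊗[R] k) :=
    ⟨fun {x _} hxy => or_iff_not_imp_left.mpr fun hx => (hdiv x hx).mul_right_eq_zero.mp hxy⟩
  have : NoZeroDivisors A := noZeroDivisors_of_tensorProduct R A k
  have : Nontrivial A := by
    by_contra h
    rw [not_nontrivial_iff_subsingleton] at h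
    exact not_subsingleton (A ⊗[R] k) inferInstance
  let incl : A →ₐ[R] F ⊗[R] A := Algebra.TensorProduct.includeRight
  have : IsLocalizedModule R⁰ incl.toLinearMap :=
    inferInstanceAs (IsLocalizedModule R⁰ (TensorProduct.mk R F A 1))
  have : NoZeroDivisors (F ⊗[R] A) := IsLocalizedModule.noZeroDivisors incl
  have : Nontrivial (F ⊗[R] A) :=
    (IsLocalizedModule.injective_of_isTorsionFree incl.toLinearMap).nontrivial
  have : IsDomain (F ⊗[R] A) := NoZeroDivisors.to_isDomain _
  let e := Algebra.TensorProduct.comm R A F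
  refine ⟨e.toEquiv.nontrivial, fun x hx => ?_⟩
  simpa using ((IsIntegral.of_finite F (e x)).isUnit (by simpa using hx)).map e.symm
end

section
/- Let ℓ be a prime and L a field such that X^ℓ - B is irreducible over L for some B ∈ L×. Suppose X, Y ∈ GL_ℓ(L) commute, Y^ℓ = B·I, and X^ℓ = I. Then X is a scalar matrix λ·I with λ^ℓ = 1, λ ∈ L. -/
/-!
Evaluation at `Y` makes the field `K = L[X]/(X ^ ℓ - B)` act on `L ^ ℓ`. As `dim_L K = ℓ`,
the orbit map `k ↦ k • v` of any nonzero vector `v` is an `L`-linear bijection `K ≃ L ^ ℓ`,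
so a matrix commuting with `Y` is determined by its value on `v` and therefore acts as an
element `k` of `K`, with `k ^ ℓ = 1`. The degree of `k` over `L` divides the prime `ℓ`; it
cannot be `ℓ`, for then `X ^ ℓ - 1` would be the (irreducible) minimal polynomial of `k`
although it has the root `1`.
-/

open Polynomial Module

theorem AdjoinRoot.commute_algHom_of_commute_root {R A : Type*} [CommRing R] [Ring A]
    [Algebra R A]
    {p : R[X]} (φ : AdjoinRoot p →ₐ[R] A) {a : A} (h : Commute a (φ (root p)))
    (k : AdjoinRoot p) : Commute a (φ k) := by
  induction k using AdjoinRoot.induction_on with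
  | ih q =>
    rw [← AdjoinRoot.aeval_eq, ← aeval_algHom_apply]
    exact Algebra.commute_of_mem_adjoin_singleton_of_commute (aeval_mem_adjoin_singleton R _) h

theorem exists_algebraMap_eq_of_pow_eq_one_of_finrank_prime {L K : Type*} [Field L] [Field K]
    [Algebra L K]
    {p : ℕ} (hp : p.Prime) (hK : finrank L K = p) {x : K} (hx : x ^ p = 1) :
    ∃ a : L, a ^ p = 1 ∧ algebraMap L K a = x := by
  have : FiniteDimensional L K := .of_finrank_pos (hK ▸ hp.pos)
  have hint := IsIntegral.of_finite L x
  rcases hp.eq_one_or_self_of_dvd _ (hK ▸ minpoly.degree_dvd hint) with h1 | hdeg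
  · obtain ⟨a, rfl⟩ := minpoly.natDegree_eq_one_iff.1 h1
    exact ⟨a, (algebraMap L K).injective (by rw [map_pow, hx, map_one]), rfl⟩
  have hnat : (X ^ p - 1 : L[X]).natDegree = p := by
    simpa using natDegree_X_pow_sub_C (r := (1 : L))
  have heq : X ^ p - 1 = minpoly L x :=
    eq_of_monic_of_dvd_of_natDegree_le (minpoly.monic hint)
      (by simpa using monic_X_pow_sub_C (1 : L) hp.ne_zero)
      (minpoly.dvd L x (by simp [hx])) (by rw [hnat, hdeg])
  have := degree_eq_one_of_irreducible_of_root (heq ▸ minpoly.irreducible hint)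
    (show IsRoot (X ^ p - 1 : L[X]) 1 by simp)
  exact absurd (hnat ▸ natDegree_eq_of_degree_eq_some this) hp.ne_one

namespace Matrix

variable {L K n : Type*} [Field L] [Field K] [Algebra L K] [Fintype n] [DecidableEq n]

theorem bijective_algHom_mulVec (hK : finrank L K = Fintype.card n)
    (φ : K →ₐ[L] Matrix n n L) {v : n → L} (hv : v ≠ 0) :
    Function.Bijective fun k => φ k *ᵥ v := by
  let ψ : K →ₗ[L] n → L := LinearMap.applyₗ v ∘ₗ toLin'.toLinearMap ∘ₗ φ.toLinearMap
  have hψ : ⇑ψ = fun k => φ k *ᵥ v := by ext; simp [ψ]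
  have hinj : Function.Injective ψ := by
    refine (injective_iff_map_eq_zero ψ).2 fun k hk => by_contra fun hk0 => hv ?_
    have : φ k⁻¹ *ᵥ (φ k *ᵥ v) = v := by
      rw [mulVec_mulVec, ← map_mul, inv_mul_cancel₀ hk0, map_one, one_mulVec]
    rwa [← congrFun hψ k, hk, mulVec_zero, eq_comm] at this
  have : Nonempty n := not_isEmpty_iff.1 fun _ => hv (Subsingleton.elim _ _)
  have : FiniteDimensional L K := .of_finrank_pos (hK ▸ Fintype.card_pos)
  rw [← hψ]
  exact ⟨hinj, (LinearMap.injective_iff_surjective_of_finrank_eq_finrank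
    (by rw [hK, finrank_pi])).1 hinj⟩

theorem exists_algHom_eq_of_forall_commute (hK : finrank L K = Fintype.card n)
    (φ : K →ₐ[L] Matrix n n L) {X : Matrix n n L} (hX : ∀ k, Commute X (φ k)) :
    ∃ k, φ k = X := by
  cases isEmpty_or_nonempty n
  · exact ⟨0, Subsingleton.elim _ _⟩
  obtain ⟨v, hv⟩ := exists_ne (0 : n → L)
  have hψ := bijective_algHom_mulVec hK φ hv
  obtain ⟨k₀, hk₀ : φ k₀ *ᵥ v = X *ᵥ v⟩ := hψ.2 (X *ᵥ v)
  refine ⟨k₀, ext_iff_mulVec.2 fun w => ?_⟩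
  obtain ⟨k, rfl⟩ := hψ.2 w
  calc φ k₀ *ᵥ φ k *ᵥ v = φ k *ᵥ φ k₀ *ᵥ v := by
        simp only [mulVec_mulVec, ← map_mul, mul_comm]
    _ = X *ᵥ φ k *ᵥ v := by
        rw [hk₀, mulVec_mulVec, mulVec_mulVec, (hX k).eq]

end Matrix

theorem stmt8_general (L : Type*) [Field L] (ℓ : ℕ) (hℓ : ℓ.Prime) (B : L)
    (hirr : Irreducible (Polynomial.X ^ ℓ - Polynomial.C B))
    (X Y : Matrix (Fin ℓ) (Fin ℓ) L)
    (hcomm : X * Y = Y * X)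
    (hY : Y ^ ℓ = B • (1 : Matrix (Fin ℓ) (Fin ℓ) L)) (hX : X ^ ℓ = 1) :
    ∃ lam : L, lam ^ ℓ = 1 ∧ X = lam • (1 : Matrix (Fin ℓ) (Fin ℓ) L) := by
  set f : L[X] := Polynomial.X ^ ℓ - C B
  have : Fact (Irreducible f) := ⟨hirr⟩
  have : NeZero ℓ := ⟨hℓ.ne_zero⟩
  have hK : finrank L (AdjoinRoot f) = ℓ :=
    finrank_quotient_span_eq_natDegree.trans natDegree_X_pow_sub_C
  have hf : f ∈ RingHom.ker (aeval Y) :=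
    RingHom.mem_ker.2 (by simp [f, hY, Algebra.algebraMap_eq_smul_one])
  let φ : AdjoinRoot f →ₐ[L] Matrix (Fin ℓ) (Fin ℓ) L :=
    Ideal.Quotient.liftₐ _ (aeval Y) fun _ hp => (Ideal.span_singleton_le_iff_mem _).2 hf hp
  have hroot : φ (AdjoinRoot.root f) = Y := aeval_X Y
  obtain ⟨k, rfl⟩ := Matrix.exists_algHom_eq_of_forall_commute
    (hK.trans (Fintype.card_fin ℓ).symm) φ
    (AdjoinRoot.commute_algHom_of_commute_root φ (hroot ▸ hcomm))
  have hk : k ^ ℓ = 1 := φ.toRingHom.injective (by simpa using hX)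
  obtain ⟨lam, hlam, rfl⟩ := exists_algebraMap_eq_of_pow_eq_one_of_finrank_prime hℓ hK hk
  exact ⟨lam, hlam, by rw [AlgHom.commutes, Algebra.algebraMap_eq_smul_one]⟩

/-- Let `ℓ` be a prime and `L` a field with `X ^ ℓ - B` irreducible for
some `B ∈ L×`.  If `X, Y ∈ GL_ℓ(L)` commute, `Y ^ ℓ = B·1` and `X ^ ℓ = 1`, then `X` is a
scalar matrix `λ·1` with `λ ^ ℓ = 1`, `λ ∈ L`. -/
theorem stmt8 (L : Type*) [Field L] (ℓ : ℕ) (hℓ : ℓ.Prime) (B : L) (hB : B ≠ 0)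
    (hirr : Irreducible (Polynomial.X ^ ℓ - Polynomial.C B))
    (X Y : Matrix (Fin ℓ) (Fin ℓ) L) (hXu : IsUnit X) (hYu : IsUnit Y)
    (hcomm : X * Y = Y * X)
    (hY : Y ^ ℓ = B • (1 : Matrix (Fin ℓ) (Fin ℓ) L)) (hX : X ^ ℓ = 1) :
    ∃ lam : L, lam ^ ℓ = 1 ∧ X = lam • (1 : Matrix (Fin ℓ) (Fin ℓ) L) :=
  stmt8_general L ℓ hℓ B hirr X Y hcomm hY hX
end

section
/- Let k be an infinite field and ℓ ≥ 2. The set of pairs (A, B) ∈ M_ℓ(k) × M_ℓ(k) such that the matrix A fails to be invertible and additionally Tr(adj(A)·B) = 0 is contained in a Zariski-closed subset of codimension at least 2 in M_ℓ(k) × M_ℓ(k); equivalently, the vanishing locus of the two polynomials det(A) and Tr(adj(A)B) on M_ℓ(k)² is a proper closed subset cut out by two algebraically independent polynomials. -/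
/-!
A common factor `r` of `det A` and `Tr(adj(A) B)` divides `det A`, which does not involve `B`,
so `r` is a polynomial in the entries of `A` alone. Substituting the matrix unit `E_ij` for `B`
then fixes `r` and turns `Tr(adj(A) B)` into the cofactor `adj(A)_ji`, so `r` divides every
cofactor of the generic matrix. As `adj(A)_ji` is nonzero and free of the variable `a_ij`, the
polynomial `r` involves no variable at all: it is a nonzero constant.
-/

open MvPolynomial

namespace MvPolynomial

variable {R σ : Type*}

theorem vars_subset_of_dvd [CommSemiring R] [NoZeroDivisors R] {p q : MvPolynomial σ R}
    (h : p ∣ q) (hq : q ≠ 0) : p.vars ⊆ q.vars := by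
  classical
  obtain ⟨c, rfl⟩ := h
  rw [vars_def, vars_def, degrees_mul_eq (left_ne_zero_of_mul hq) (right_ne_zero_of_mul hq),
    Multiset.toFinset_add]
  exact Finset.subset_union_left

theorem det_mem_supported [CommRing R] {n : Type*} [Fintype n] [DecidableEq n] {s : Set σ}
    {M : Matrix n n (MvPolynomial σ R)} (h : ∀ i j, M i j ∈ supported R s) :
    M.det ∈ supported R s := by
  let M' : Matrix n n (supported R s) := fun i j => ⟨M i j, h i j⟩
  have hM : M = (supported R s).val.mapMatrix M' := rfl
  rw [hM, ← AlgHom.map_det]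
  exact M'.det.2

theorem vars_rename_subset_range {τ : Type*} [CommSemiring R] (f : σ → τ)
    (p : MvPolynomial σ R) : ((rename f p).vars : Set τ) ⊆ Set.range f := by
  rintro _ hv
  obtain ⟨u, -, rfl⟩ := mem_vars_rename f p hv
  exact ⟨u, rfl⟩

end MvPolynomial

namespace Matrix

variable {n R : Type*} [Fintype n] [DecidableEq n]

theorem adjugate_mvPolynomialX_apply_ne_zero [CommRing R] [Nontrivial R] (i j : n) :
    (mvPolynomialX n n R).adjugate j i ≠ 0 := by
  set P := (Equiv.swap i j).permMatrix R
  have hPi : P i = Pi.single j 1 := by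
    ext b
    simp [P, Equiv.Perm.permMatrix, PEquiv.toMatrix_apply, Pi.single_apply, eq_comm]
  have hadj : P.adjugate j i = P.det := by
    rw [adjugate_apply, ← hPi, updateRow_eq_self]
  have heval : eval (fun p : n × n => P p.1 p.2) ((mvPolynomialX n n R).adjugate j i) =
      P.adjugate j i := by
    change (eval _).mapMatrix (mvPolynomialX n n R).adjugate j i = _
    rw [RingHom.map_adjugate, mvPolynomialX_mapMatrix_eval]
  intro h
  rw [h, map_zero, hadj, det_permutation] at heval
  rcases Int.units_eq_one_or (Equiv.Perm.sign (Equiv.swap i j)) with hs | hs <;>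
    simp [hs] at heval

theorem notMem_vars_adjugate_mvPolynomialX_apply [CommRing R] (i j : n) :
    (i, j) ∉ ((mvPolynomialX n n R).adjugate j i).vars := by
  have : (mvPolynomialX n n R).adjugate j i ∈ supported R {(i, j)}ᶜ := by
    rw [adjugate_apply]
    refine det_mem_supported fun a b => ?_
    by_cases ha : a = i
    · subst ha
      rw [updateRow_self, Pi.single_apply]
      split_ifs
      exacts [one_mem _, zero_mem _]
    · rw [updateRow_ne ha, mvPolynomialX_apply]
      exact Algebra.subset_adjoin ⟨_, by simp [ha], rfl⟩
  simpa [mem_supported] using this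

theorem isUnit_of_forall_dvd_adjugate_mvPolynomialX {K : Type*} [Field K]
    {r : MvPolynomial (n × n) K} (hr : r ≠ 0)
    (h : ∀ i j, r ∣ (mvPolynomialX n n K).adjugate j i) : IsUnit r := by
  have hvars : r.vars = ∅ := by
    refine Finset.eq_empty_of_forall_notMem fun ⟨i, j⟩ hij => ?_
    exact notMem_vars_adjugate_mvPolynomialX_apply i j
      (vars_subset_of_dvd (h i j) (adjugate_mvPolynomialX_apply_ne_zero i j) hij)
  rw [vars_eq_empty_iff_eq_C.1 hvars] at hr ⊢
  exact (isUnit_iff_ne_zero.2 fun h0 => hr (by rw [h0, map_zero])).map C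

theorem aeval_trace_adjugate_mul_mvPolynomialX [CommRing R] (i j : n) :
    aeval (Sum.elim X (Pi.single (i, j) 1))
      (((mvPolynomialX n n R).map (rename Sum.inl)).adjugate *
        (mvPolynomialX n n R).map (rename Sum.inr)).trace =
      (mvPolynomialX n n R).adjugate j i := by
  set φ := aeval (R := R) (Sum.elim X (Pi.single (i, j) (1 : MvPolynomial (n × n) R)))
  have hA : φ.mapMatrix ((mvPolynomialX n n R).map (rename Sum.inl)) = mvPolynomialX n n R := by
    ext a b
    simp [φ, mvPolynomialX_apply]
  have hB : φ.mapMatrix ((mvPolynomialX n n R).map (rename Sum.inr)) = single i j 1 := by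
    ext a b
    simp [φ, mvPolynomialX_apply, single, Pi.single_apply, @eq_comm _ i, @eq_comm _ j]
  rw [AddMonoidHom.map_trace φ, ← AlgHom.mapMatrix_apply, map_mul, AlgHom.map_adjugate, hA, hB,
    trace_mul_single, MulOpposite.op_one, one_smul]

end Matrix

theorem stmt16_general (k : Type*) [Field k] (ℓ : ℕ) :
    let R := MvPolynomial ((Fin ℓ × Fin ℓ) ⊕ (Fin ℓ × Fin ℓ)) k
    let A : Matrix (Fin ℓ) (Fin ℓ) R := fun i j => MvPolynomial.X (Sum.inl (i, j))
    let B : Matrix (Fin ℓ) (Fin ℓ) R := fun i j => MvPolynomial.X (Sum.inr (i, j))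
    ∀ r : R, r ∣ A.det → r ∣ (A.adjugate * B).trace → IsUnit r := by
  intro R A B r hdet htr
  set M := Matrix.mvPolynomialX (Fin ℓ) (Fin ℓ) k
  have hA : A = M.map (rename Sum.inl) := by ext; simp [A, M, Matrix.mvPolynomialX_apply]
  have hB : B = M.map (rename Sum.inr) := by ext; simp [B, M, Matrix.mvPolynomialX_apply]
  have hdetA : A.det = rename Sum.inl M.det := by
    rw [hA, AlgHom.map_det]
    rfl
  have hdet0 : A.det ≠ 0 := by
    rw [hdetA]
    exact (map_ne_zero_iff _ (rename_injective _ Sum.inl_injective)).2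
      (Matrix.det_mvPolynomialX_ne_zero _ k)
  obtain ⟨r₀, rfl⟩ := exists_rename_eq_of_vars_subset_range r Sum.inl Sum.inl_injective <|
    (Finset.coe_subset.2 (vars_subset_of_dvd hdet hdet0)).trans
      (hdetA ▸ vars_rename_subset_range _ _)
  have hr₀ : r₀ ≠ 0 := by
    rintro rfl
    exact hdet0 (zero_dvd_iff.1 (by simpa using hdet))
  refine (Matrix.isUnit_of_forall_dvd_adjugate_mvPolynomialX hr₀ fun i j => ?_).map _
  rw [hA, hB] at htr
  have hspec := map_dvd
    (aeval (Sum.elim X (Pi.single (i, j) 1)) : R →ₐ[k] MvPolynomial (Fin ℓ × Fin ℓ) k) htr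
  rwa [Matrix.aeval_trace_adjugate_mul_mvPolynomialX, aeval_rename, Sum.elim_comp_inl,
    aeval_X_left_apply] at hspec

/-- For `ℓ ≥ 2` and an infinite field `k`, the polynomials
`det A` and `Tr(adj(A)·B)` in the `2ℓ²` coordinates of a pair of generic `ℓ × ℓ`
matrices `(A, B)` have no common non-unit factor; hence their common vanishing locus
has codimension at least `2` in `M_ℓ(k) × M_ℓ(k)`. -/
theorem stmt16 (k : Type*) [Field k] [Infinite k] (ℓ : ℕ) (hℓ : 2 ≤ ℓ) :
    let R := MvPolynomial ((Fin ℓ × Fin ℓ) ⊕ (Fin ℓ × Fin ℓ)) k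
    let A : Matrix (Fin ℓ) (Fin ℓ) R := fun i j => MvPolynomial.X (Sum.inl (i, j))
    let B : Matrix (Fin ℓ) (Fin ℓ) R := fun i j => MvPolynomial.X (Sum.inr (i, j))
    ∀ r : R, r ∣ A.det → r ∣ (A.adjugate * B).trace → IsUnit r :=
  stmt16_general k ℓ
end
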